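/- arXiv:1407.8039 — 6 statements merged into one kernel-verified Lean document; each statement's English description precedes it below -/
import Mathlib

section
/- In the cycle-weight setting, π is a stationary measure of 𝒫: for every y ∈ V, Σ_{x∈V} π(x) 𝒫_{xy} = π(y). -/
/-- Cycle-weight setting, see paper Section 2.3. -/
theorem pi_stationary_of_P {V Γ : Type*} [Fintype V] [Fintype Γ] [Nonempty V] [Nonempty Γ]
    [DecidableEq V] [DecidableEq Γ]
    (m : Γ → Finset V) (hm : ∀ α, (m α).Nonempty)
    (w : Γ → ℝ) (hw : ∀ α, 0 < w α)
    (π : V → ℝ)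
    (hπ : ∀ x, π x = ∑ α ∈ Finset.univ.filter (fun α => x ∈ m α), w α)
    (hπpos : ∀ x, 0 < π x)
    (B : Matrix V Γ ℝ)
    (hB : ∀ x α, B x α = if x ∈ m α then w α / π x else 0)
    (Vm : Matrix Γ V ℝ)
    (hV : ∀ α y, Vm α y = if y ∈ m α then 1 / ((m α).card : ℝ) else 0)
    (P : Matrix V V ℝ) (hP : P = B * Vm)
    (Q : Matrix Γ Γ ℝ) (hQ : Q = Vm * B)
    (μ : Γ → ℝ) (hμ : ∀ α, μ α = ((m α).card : ℝ) * w α) :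
    ∀ y, ∑ x, π x * P x y = π y := by
  intro y
  subst hP
  simp only [Matrix.mul_apply, Finset.mul_sum]
  rw [Finset.sum_comm]
  have key : ∀ α, ∑ x, π x * (B x α * Vm α y) = if y ∈ m α then w α else 0 := by
    intro α
    have hx : ∀ x, π x * (B x α * Vm α y) =
        if x ∈ m α then w α * Vm α y else 0 := by
      intro x
      rw [hB]
      split_ifs with h
      · field_simp [(hπpos x).ne']
      · ring
    simp_rw [hx]
    rw [Finset.sum_ite_mem, Finset.univ_inter, Finset.sum_const, nsmul_eq_mul, hV]
    have hc : ((m α).card : ℝ) ≠ 0 := by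
      exact_mod_cast (Finset.card_pos.mpr (hm α)).ne'
    split_ifs with h
    · field_simp
    · ring
  simp_rw [key]
  rw [hπ y, Finset.sum_filter]
end

section
/- In the cycle-weight setting, μ is a stationary measure of 𝒬: for every β ∈ Γ, Σ_{α∈Γ} μ(α) 𝒬_{αβ} = μ(β). -/
/-- Cycle-weight setting, see paper Section 2.3. -/
theorem mu_stationary_of_Q {V Γ : Type*} [Fintype V] [Fintype Γ] [Nonempty V] [Nonempty Γ]
    [DecidableEq V] [DecidableEq Γ]
    (m : Γ → Finset V) (hm : ∀ α, (m α).Nonempty)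
    (w : Γ → ℝ) (hw : ∀ α, 0 < w α)
    (π : V → ℝ)
    (hπ : ∀ x, π x = ∑ α ∈ Finset.univ.filter (fun α => x ∈ m α), w α)
    (hπpos : ∀ x, 0 < π x)
    (B : Matrix V Γ ℝ)
    (hB : ∀ x α, B x α = if x ∈ m α then w α / π x else 0)
    (Vm : Matrix Γ V ℝ)
    (hV : ∀ α y, Vm α y = if y ∈ m α then 1 / ((m α).card : ℝ) else 0)
    (P : Matrix V V ℝ) (hP : P = B * Vm)
    (Q : Matrix Γ Γ ℝ) (hQ : Q = Vm * B)
    (μ : Γ → ℝ) (hμ : ∀ α, μ α = ((m α).card : ℝ) * w α) :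
    ∀ β, ∑ α, μ α * Q α β = μ β := by
  intro β
  subst hQ
  simp only [Matrix.mul_apply, Finset.mul_sum]
  rw [Finset.sum_comm]
  have key : ∀ x, ∑ α, μ α * (Vm α x * B x β) = π x * B x β := by
    intro x
    have : ∀ α, μ α * (Vm α x * B x β) =
        (if x ∈ m α then w α else 0) * B x β := by
      intro α
      rw [hμ, hV]
      have hc : ((m α).card : ℝ) ≠ 0 := by
        exact_mod_cast Finset.card_ne_zero_of_mem (hm α).choose_spec
      by_cases h : x ∈ m α <;> simp [h] <;> field_simp <;> ring
    simp only [this, ← Finset.sum_mul]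
    congr 1
    rw [hπ x]
    rw [Finset.sum_filter]
  simp only [key]
  rw [hμ]
  have : ∀ x, π x * B x β = if x ∈ m β then w β else 0 := by
    intro x
    rw [hB]
    by_cases h : x ∈ m β <;> simp [h]
    rw [mul_comm, div_mul_cancel₀ _ (hπpos x).ne']
  simp only [this]
  rw [Finset.sum_ite_mem, Finset.univ_inter, Finset.sum_const, nsmul_eq_mul]
end

section
/- For the barbell graph Markov chain with parameters n ≥ 3 and ε ∈ (0,1), the directed modularity of the two-module partition C_1 = {l_0,…,l_{n−1}}, C_2 = {r_0,…,r_{n−1}} equals Q(C_1,C_2) = 1/2 − ε/(n+ε). -/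
/-- Transition matrix of the barbell graph Markov chain: two directed `n`-cycles
(left = `Sum.inl`, right = `Sum.inr`) joined at `l₀, r₀` by an edge of weight `ε`. -/
noncomputable def barbellP (n : ℕ) (ε : ℝ) :
    Matrix (Fin n ⊕ Fin n) (Fin n ⊕ Fin n) ℝ :=
  Matrix.of fun x y =>
    match x, y with
    | Sum.inl i, Sum.inl j =>
        if i.val ≠ 0 ∧ j.val = (i.val + 1) % n then 1
        else if i.val = 0 ∧ j.val = 1 then 1 / (1 + ε) else 0
    | Sum.inl i, Sum.inr j => if i.val = 0 ∧ j.val = 0 then ε / (1 + ε) else 0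
    | Sum.inr i, Sum.inl j => if i.val = 0 ∧ j.val = 0 then ε / (1 + ε) else 0
    | Sum.inr i, Sum.inr j =>
        if i.val ≠ 0 ∧ j.val = (i.val + 1) % n then 1
        else if i.val = 0 ∧ j.val = 1 then 1 / (1 + ε) else 0

/-- The stationary distribution of the barbell graph Markov chain. -/
noncomputable def barbellPi (n : ℕ) (ε : ℝ) : Fin n ⊕ Fin n → ℝ := fun x =>
  match x with
  | Sum.inl i => if i.val = 0 then (1 + ε) / (2 * ((n : ℝ) + ε)) else 1 / (2 * ((n : ℝ) + ε))
  | Sum.inr i => if i.val = 0 then (1 + ε) / (2 * ((n : ℝ) + ε)) else 1 / (2 * ((n : ℝ) + ε))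

/-- The modularity-type functional `∑ m ∑ x ∑ y χ m x * (A x y - π x * π y) * χ m y`
of a (fuzzy) partition given by the functions `χ m` with respect to the flow-type
matrix `A` and the distribution `π`. -/
noncomputable def modularity {V : Type*} [Fintype V] {M : ℕ}
    (A : V → V → ℝ) (π : V → ℝ) (χ : Fin M → V → ℝ) : ℝ :=
  ∑ m, ∑ x, ∑ y, χ m x * (A x y - π x * π y) * χ m y

/-- Indicator functions of the two-module partition `C₁ = {l₀,…,l_{n-1}}`,
`C₂ = {r₀,…,r_{n-1}}` of the barbell graph. -/
def barbellChi2 (n : ℕ) : Fin 2 → (Fin n ⊕ Fin n) → ℝ := fun m x =>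
  match x with
  | Sum.inl _ => if m = 0 then 1 else 0
  | Sum.inr _ => if m = 1 then 1 else 0

/-- Indicator functions of the three-module partition `C_{1,a} = {l₀,…,l_{n/2-1}}`,
`C_{1,b} = {l_{n/2},…,l_{n-1}}`, `C₂ = {r₀,…,r_{n-1}}` of the barbell graph. -/
def barbellChi3 (n : ℕ) : Fin 3 → (Fin n ⊕ Fin n) → ℝ := fun m x =>
  match x with
  | Sum.inl i => if m = 0 ∧ i.val < n / 2 then 1
                 else if m = 1 ∧ n / 2 ≤ i.val then 1 else 0
  | Sum.inr _ => if m = 2 then 1 else 0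


lemma aux_sum_ite_val (n : ℕ) {c : ℕ} (hc : c < n) (a : ℝ) :
    ∑ j : Fin n, (if j.val = c then a else 0) = a := by
  have h : ∀ j : Fin n, (if j.val = c then a else 0) = (if j = ⟨c, hc⟩ then a else 0) :=
    fun j => by simp [Fin.ext_iff]
  simp_rw [h]
  simp

lemma aux_sum_ite_zero (n : ℕ) (hn : 0 < n) (a b : ℝ) :
    ∑ i : Fin n, (if i.val = 0 then a else b) = a + ((n : ℝ) - 1) * b := by
  have h : ∀ i : Fin n, (if i.val = 0 then a else b) =
      (if i.val = 0 then a - b else 0) + b := fun i => by split <;> ring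
  simp_rw [h, Finset.sum_add_distrib, aux_sum_ite_val n hn (a - b)]
  simp [Finset.card_univ]
  ring

lemma aux_rowsum (n : ℕ) (hn : 3 ≤ n) (ε : ℝ) (i : Fin n) :
    ∑ j : Fin n, barbellP n ε (Sum.inl i) (Sum.inl j)
      = if i.val = 0 then 1 / (1 + ε) else 1 := by
  by_cases hi : i.val = 0
  · have h : ∀ j : Fin n, barbellP n ε (Sum.inl i) (Sum.inl j)
        = if j.val = 1 then 1 / (1 + ε) else 0 := fun j => by
      show (if i.val ≠ 0 ∧ j.val = (i.val + 1) % n then (1:ℝ)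
            else if i.val = 0 ∧ j.val = 1 then 1 / (1 + ε) else 0) = _
      simp [hi]
    simp_rw [h, aux_sum_ite_val n (by omega : 1 < n)]; rw [if_pos hi]
  · have h : ∀ j : Fin n, barbellP n ε (Sum.inl i) (Sum.inl j)
        = if j.val = (i.val + 1) % n then 1 else 0 := fun j => by
      show (if i.val ≠ 0 ∧ j.val = (i.val + 1) % n then (1:ℝ)
            else if i.val = 0 ∧ j.val = 1 then 1 / (1 + ε) else 0) = _
      simp [hi]
    simp_rw [h, aux_sum_ite_val n (Nat.mod_lt _ (by omega))]; rw [if_neg hi]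

/-- The directed modularity of the two-module partition of the
barbell graph equals `1/2 - ε/(n+ε)`. -/
theorem barbell_dirModularity_two (n : ℕ) (hn : 3 ≤ n) (ε : ℝ) (hε0 : 0 < ε) (hε1 : ε < 1) :
    modularity (fun x y => barbellPi n ε x * barbellP n ε x y) (barbellPi n ε)
        (barbellChi2 n)
      = 1 / 2 - ε / ((n : ℝ) + ε) := by
  have hn0 : (0:ℝ) < (n:ℝ) + ε := by positivity
  have h1ε : (0:ℝ) < 1 + ε := by positivity
  have hpi : ∑ j : Fin n, barbellPi n ε (Sum.inl j) = 1 / 2 := by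
    show ∑ j : Fin n, (if j.val = 0 then (1+ε)/(2*((n:ℝ)+ε)) else 1/(2*((n:ℝ)+ε))) = 1/2
    rw [aux_sum_ite_zero n (by omega)]
    field_simp
    ring
  have hpiP : ∑ i : Fin n,
      barbellPi n ε (Sum.inl i) * (∑ j, barbellP n ε (Sum.inl i) (Sum.inl j))
        = (n:ℝ) / (2*((n:ℝ)+ε)) := by
    have h : ∀ i : Fin n,
        barbellPi n ε (Sum.inl i) * (∑ j, barbellP n ε (Sum.inl i) (Sum.inl j))
          = if i.val = 0 then (1+ε)/(2*((n:ℝ)+ε)) * (1/(1+ε)) else 1/(2*((n:ℝ)+ε)) := by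
      intro i
      rw [aux_rowsum n hn ε i]
      show (if i.val = 0 then (1+ε)/(2*((n:ℝ)+ε)) else 1/(2*((n:ℝ)+ε))) * _ = _
      split <;> ring
    simp_rw [h]
    rw [aux_sum_ite_zero n (by omega)]
    field_simp
    ring
  have key : ∑ i : Fin n, ∑ j : Fin n,
      (barbellPi n ε (Sum.inl i) * barbellP n ε (Sum.inl i) (Sum.inl j)
        - barbellPi n ε (Sum.inl i) * barbellPi n ε (Sum.inl j))
      = (n:ℝ) / (2*((n:ℝ)+ε)) - 1/4 := by
    simp_rw [Finset.sum_sub_distrib, ← Finset.mul_sum, hpi]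
    rw [hpiP, ← Finset.sum_mul, hpi]
    ring
  have hc0l : ∀ i : Fin n, barbellChi2 n 0 (Sum.inl i) = 1 := fun _ => rfl
  have hc0r : ∀ i : Fin n, barbellChi2 n 0 (Sum.inr i) = 0 := fun _ => rfl
  have hc1l : ∀ i : Fin n, barbellChi2 n 1 (Sum.inl i) = 0 := fun _ => rfl
  have hc1r : ∀ i : Fin n, barbellChi2 n 1 (Sum.inr i) = 1 := fun _ => rfl
  have hrP : ∀ i j : Fin n, barbellP n ε (Sum.inr i) (Sum.inr j)
      = barbellP n ε (Sum.inl i) (Sum.inl j) := fun _ _ => rfl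
  have hrpi : ∀ i : Fin n, barbellPi n ε (Sum.inr i) = barbellPi n ε (Sum.inl i) :=
    fun _ => rfl
  unfold modularity
  rw [Fin.sum_univ_two]
  simp only [Fintype.sum_sum_type, hc0l, hc0r, hc1l, hc1r, hrP, hrpi,
    one_mul, mul_one, zero_mul, mul_zero, Finset.sum_const_zero, add_zero, zero_add]
  rw [key]
  field_simp
  ring
end

section
/- For the barbell graph Markov chain with even n ≥ 8 and ε ∈ (0,1), splitting the left module strictly increases directed modularity: for the three-module partition C_{1,a} = {l_0,…,l_{n/2−1}}, C_{1,b} = {l_{n/2},…,l_{n−1}}, C_2 = {r_0,…,r_{n−1}}, one has Q(C_{1,a}, C_{1,b}, C_2) > Q(C_1, C_2), where C_1 = {l_0,…,l_{n−1}}. Hence maximization of the directed modularity Q does not return the partition {C_1, C_2} for n ≥ 8. -/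
/-!
Modularity is `Q(χ) = ∑ₘ B(χₘ, χₘ)` for the bilinear form
`B(u, v) = ∑ₓ ∑ᵧ u x (π x p x y - π x π y) v y`, so splitting `C₁ = a ∪ b` changes it by
`-B(a, b) - B(b, a) = 2 π(a) π(b) - F(a, b) - F(b, a)`, where `F` is the stationary probability
flow. Only the edges `l_{n/2-1} → l_{n/2}` and `l_{n-1} → l₀` cross between the two halves, each
carrying flow `1 / D` with `D = 2 (n + ε)`, while `π(a) π(b) = (k + ε) (n - k) / D²` for
`k = n / 2`. The gain is positive as soon as `(k + ε) (n - k) > D`, which holds for `k ≥ 4`.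
-/

open Finset

theorem Fin.sum_ite_val_lt {M : Type*} [AddCommMonoid M] {n k : ℕ} (hk : k ≤ n) (f : ℕ → M) :
    ∑ i : Fin n, (if i.val < k then f i else 0) = ∑ i ∈ range k, f i := by
  rw [Fin.sum_univ_eq_sum_range (fun i => if i < k then f i else 0), ← sum_filter,
    range_eq_Ico, Ico_filter_lt, min_eq_right hk, ← range_eq_Ico]

theorem Fin.sum_ite_le_val {M : Type*} [AddCommMonoid M] (n k : ℕ) (f : ℕ → M) :
    ∑ i : Fin n, (if k ≤ i.val then f i else 0) = ∑ i ∈ Ico k n, f i := by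
  rw [Fin.sum_univ_eq_sum_range (fun i => if k ≤ i then f i else 0), ← sum_filter,
    range_eq_Ico, Ico_filter_le, max_eq_right k.zero_le]

theorem Fintype.sum_sum_eq_single {α β M : Type*} [Fintype α] [Fintype β] [AddCommMonoid M]
    {F : α → β → M} (a : α) (b : β) (h : ∀ x y, F x y ≠ 0 → x = a ∧ y = b) :
    ∑ x, ∑ y, F x y = F a b := by
  rw [← Fintype.sum_prod_type', Fintype.sum_eq_single (a, b)]
  rintro ⟨x, y⟩ hxy
  by_contra hne
  obtain ⟨rfl, rfl⟩ := h x y hne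
  exact hxy rfl

section Modularity

variable {V : Type*} [Fintype V] (A : V → V → ℝ) (π : V → ℝ)

noncomputable def modularityForm (u v : V → ℝ) : ℝ :=
  ∑ x, ∑ y, u x * (A x y - π x * π y) * v y

theorem modularity_eq_sum_modularityForm {M : ℕ} (χ : Fin M → V → ℝ) :
    modularity A π χ = ∑ m, modularityForm A π (χ m) (χ m) :=
  rfl

theorem modularityForm_eq (u v : V → ℝ) :
    modularityForm A π u v
      = ∑ x, ∑ y, u x * A x y * v y - (∑ x, u x * π x) * ∑ y, v y * π y := by
  simp only [modularityForm, mul_sub, sub_mul, sum_sub_distrib, sum_mul_sum]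
  congr 1
  exact sum_congr rfl fun x _ => sum_congr rfl fun y _ => by ring

theorem modularityForm_add_add (u v : V → ℝ) :
    modularityForm A π (u + v) (u + v)
      = modularityForm A π u u + modularityForm A π v v
        + (modularityForm A π u v + modularityForm A π v u) := by
  simp only [modularityForm, ← sum_add_distrib, Pi.add_apply]
  exact sum_congr rfl fun x _ => sum_congr rfl fun y _ => by ring

theorem modularity_sub_of_split (χ₂ : Fin 2 → V → ℝ) (χ₃ : Fin 3 → V → ℝ)
    (h₀ : χ₂ 0 = χ₃ 0 + χ₃ 1) (h₁ : χ₂ 1 = χ₃ 2) :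
    modularity A π χ₃ - modularity A π χ₂
      = -(modularityForm A π (χ₃ 0) (χ₃ 1) + modularityForm A π (χ₃ 1) (χ₃ 0)) := by
  rw [modularity_eq_sum_modularityForm, modularity_eq_sum_modularityForm, Fin.sum_univ_three,
    Fin.sum_univ_two, h₀, h₁, modularityForm_add_add]
  ring

end Modularity

section Barbell

variable (n : ℕ) (ε : ℝ)

theorem barbellChi2_zero : barbellChi2 n 0 = barbellChi3 n 0 + barbellChi3 n 1 := by
  ext (i | i)
  · by_cases h : i.val < n / 2 <;> simp [barbellChi2, barbellChi3, h, le_of_not_gt]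
  · simp [barbellChi2, barbellChi3]

theorem barbellChi2_one : barbellChi2 n 1 = barbellChi3 n 2 := by
  ext (i | i) <;> simp [barbellChi2, barbellChi3]

theorem barbellPi_inl (i : Fin n) :
    barbellPi n ε (.inl i) = (1 + if i.val = 0 then ε else 0) / (2 * ((n : ℝ) + ε)) := by
  by_cases h : i.val = 0 <;> simp [barbellPi, h]

theorem barbellP_inl_inl_of_ne_zero {i : Fin n} (hi : i.val ≠ 0) (j : Fin n) :
    barbellP n ε (.inl i) (.inl j) = if j.val = (i.val + 1) % n then 1 else 0 := by
  simp [barbellP, hi]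

theorem val_eq_of_barbellP_inl_inl_ne_zero (hn : 2 ≤ n) {i j : Fin n}
    (h : barbellP n ε (.inl i) (.inl j) ≠ 0) : j.val = (i.val + 1) % n := by
  by_contra hj
  by_cases hi : i.val = 0
  · rw [hi, zero_add, Nat.one_mod_eq_one.2 (by omega)] at hj
    simp [barbellP, hi, hj] at h
  · simp [barbellP_inl_inl_of_ne_zero n ε hi, hj] at h

theorem sum_barbellChi3_zero_mul_barbellPi (hn : 2 ≤ n) :
    ∑ x, barbellChi3 n 0 x * barbellPi n ε x = ((n / 2 : ℕ) + ε) / (2 * ((n : ℝ) + ε)) := by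
  simp only [Fintype.sum_sum_type, barbellChi3, barbellPi_inl, Fin.isValue, true_and,
    Fin.reduceEq, false_and, ↓reduceIte, ite_mul, one_mul, zero_mul, sum_const_zero, add_zero]
  rw [Fin.sum_ite_val_lt (n.div_le_self 2)
      (fun i => (1 + if i = 0 then ε else 0) / (2 * ((n : ℝ) + ε))),
    ← sum_div, sum_add_distrib, sum_ite_eq', if_pos (mem_range.2 (by omega))]
  simp

theorem sum_barbellChi3_one_mul_barbellPi (hn : 2 ≤ n) :
    ∑ x, barbellChi3 n 1 x * barbellPi n ε x = (n - n / 2 : ℕ) / (2 * ((n : ℝ) + ε)) := by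
  simp only [Fintype.sum_sum_type, barbellChi3, barbellPi_inl, Fin.isValue, one_ne_zero,
    true_and, Fin.reduceEq, false_and, ↓reduceIte, ite_mul, one_mul, zero_mul, sum_const_zero,
    add_zero]
  rw [Fin.sum_ite_le_val n (n / 2)
      (fun i => (1 + if i = 0 then ε else 0) / (2 * ((n : ℝ) + ε))),
    ← sum_div, sum_add_distrib, sum_ite_eq', if_neg (by simp; omega)]
  simp

theorem barbell_flow_lower_upper (hn : 4 ≤ n) :
    ∑ x, ∑ y, barbellChi3 n 0 x * (barbellPi n ε x * barbellP n ε x y) * barbellChi3 n 1 y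
      = 1 / (2 * ((n : ℝ) + ε)) := by
  rw [Fintype.sum_sum_eq_single (.inl ⟨n / 2 - 1, by omega⟩) (.inl ⟨n / 2, by omega⟩)]
  · have hk : n / 2 - 1 ≠ 0 := by omega
    rw [barbellP_inl_inl_of_ne_zero n ε hk, Nat.sub_add_cancel (by omega),
      Nat.mod_eq_of_lt (by omega)]
    simp [barbellChi3, barbellPi, hk, show ¬n ≤ 1 by omega]
  · rintro (i | i) (j | j) h <;> simp [barbellChi3] at h
    obtain ⟨hj, hi, -, hp⟩ := h
    have hij := val_eq_of_barbellP_inl_inl_ne_zero n ε (by omega) hp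
    rw [Nat.mod_eq_of_lt (by omega)] at hij
    simp [Fin.ext_iff]
    omega

theorem barbell_flow_upper_lower (hn : 2 ≤ n) :
    ∑ x, ∑ y, barbellChi3 n 1 x * (barbellPi n ε x * barbellP n ε x y) * barbellChi3 n 0 y
      = 1 / (2 * ((n : ℝ) + ε)) := by
  rw [Fintype.sum_sum_eq_single (.inl ⟨n - 1, by omega⟩) (.inl ⟨0, by omega⟩)]
  · have hk : n - 1 ≠ 0 := by omega
    rw [barbellP_inl_inl_of_ne_zero n ε hk, Nat.sub_add_cancel (by omega), Nat.mod_self]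
    simp [barbellChi3, barbellPi, hk, hn, show n / 2 ≤ n - 1 by omega]
  · rintro (i | i) (j | j) h <;> simp [barbellChi3] at h
    obtain ⟨hj, hi, -, hp⟩ := h
    have hij := val_eq_of_barbellP_inl_inl_ne_zero n ε hn hp
    have hi' : i.val + 1 = n := by
      by_contra hne
      rw [Nat.mod_eq_of_lt (by omega)] at hij
      omega
    rw [hi', Nat.mod_self] at hij
    simp [Fin.ext_iff]
    omega

end Barbell

theorem barbell_dirModularity_split_better_general (n : ℕ) (hn : 8 ≤ n)
    (ε : ℝ) (hε0 : 0 < ε) :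
    modularity (fun x y => barbellPi n ε x * barbellP n ε x y) (barbellPi n ε)
        (barbellChi3 n)
      > modularity (fun x y => barbellPi n ε x * barbellP n ε x y) (barbellPi n ε)
        (barbellChi2 n) := by
  rw [gt_iff_lt, ← sub_pos,
    modularity_sub_of_split _ _ _ _ (barbellChi2_zero n) (barbellChi2_one n)]
  simp only [modularityForm_eq]
  rw [barbell_flow_lower_upper n ε (by omega), barbell_flow_upper_lower n ε (by omega),
    sum_barbellChi3_zero_mul_barbellPi n ε (by omega),
    sum_barbellChi3_one_mul_barbellPi n ε (by omega)]
  have hgain : 2 * ((n : ℝ) + ε) < ((n / 2 : ℕ) + ε) * (n - n / 2 : ℕ) := by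
    have hk : (4 : ℝ) ≤ (n / 2 : ℕ) := by exact_mod_cast (by omega : 4 ≤ n / 2)
    have hkm : ((n / 2 : ℕ) : ℝ) ≤ (n - n / 2 : ℕ) := by
      exact_mod_cast (by omega : n / 2 ≤ n - n / 2)
    rw [show (n : ℝ) = (n / 2 : ℕ) + (n - n / 2 : ℕ) by
      exact_mod_cast (by omega : n = n / 2 + (n - n / 2))]
    nlinarith
  have hgain_eq : ∀ a b D : ℝ,
      -(1 / D - a / D * (b / D) + (1 / D - b / D * (a / D))) = 2 * (a * b - D) / D ^ 2 := by
    intro a b D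
    field_simp
    ring
  rw [hgain_eq]
  exact div_pos (by linarith) (by positivity)

/-- For even `n ≥ 8`, splitting the left module strictly increases the
directed modularity of the barbell graph, so `Q`-maximization does not return `{C₁, C₂}`. -/
theorem barbell_dirModularity_split_better (n : ℕ) (hn : 8 ≤ n) (hn2 : Even n)
    (ε : ℝ) (hε0 : 0 < ε) (hε1 : ε < 1) :
    modularity (fun x y => barbellPi n ε x * barbellP n ε x y) (barbellPi n ε)
        (barbellChi3 n)
      > modularity (fun x y => barbellPi n ε x * barbellP n ε x y) (barbellPi n ε)
        (barbellChi2 n) :=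
  barbell_dirModularity_split_better_general n hn ε hε0
end

section
/- For the barbell graph with parameters n ≥ 3 and ε ∈ (0,1) and its communication weights I, the communication-graph modularity of the two-module partition C_1 = {l_0,…,l_{n−1}}, C_2 = {r_0,…,r_{n−1}} equals Q̄(C_1,C_2) = 1/2 − ε/(2(n+ε)). -/
/-- Communication weights `I x y` of the barbell graph (with `w = 1/(2(n+ε))`):
`w/n` within the left or right cycle, with an extra `εw/2` on the diagonal entries at
`l₀` and `r₀`; `εw/2` between `l₀` and `r₀`; and `0` otherwise. -/
noncomputable def barbellI (n : ℕ) (ε : ℝ) : (Fin n ⊕ Fin n) → (Fin n ⊕ Fin n) → ℝ :=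
  fun x y =>
    match x, y with
    | Sum.inl i, Sum.inl j =>
        if i.val = 0 ∧ j.val = 0 then ε * (1 / (2 * ((n : ℝ) + ε))) / 2 + (1 / (2 * ((n : ℝ) + ε))) / n
        else (1 / (2 * ((n : ℝ) + ε))) / n
    | Sum.inr i, Sum.inr j =>
        if i.val = 0 ∧ j.val = 0 then ε * (1 / (2 * ((n : ℝ) + ε))) / 2 + (1 / (2 * ((n : ℝ) + ε))) / n
        else (1 / (2 * ((n : ℝ) + ε))) / n
    | Sum.inl i, Sum.inr j =>
        if i.val = 0 ∧ j.val = 0 then ε * (1 / (2 * ((n : ℝ) + ε))) / 2 else 0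
    | Sum.inr i, Sum.inl j =>
        if i.val = 0 ∧ j.val = 0 then ε * (1 / (2 * ((n : ℝ) + ε))) / 2 else 0

/-- The communication-graph modularity of the two-module partition of the
barbell graph equals `1/2 - ε/(2(n+ε))`. -/
theorem barbell_commModularity_two (n : ℕ) (hn : 3 ≤ n) (ε : ℝ) (hε0 : 0 < ε) (hε1 : ε < 1) :
    modularity (barbellI n ε) (barbellPi n ε) (barbellChi2 n)
      = 1 / 2 - ε / (2 * ((n : ℝ) + ε)) := by
  have hnpos : 0 < n := by omega
  haveI : NeZero n := ⟨by omega⟩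
  have hn0 : (n:ℝ) ≠ 0 := by positivity
  have hne : (n:ℝ) + ε ≠ 0 := by positivity
  have key : ∀ (a b : ℝ), ∑ i : Fin n, (if i.val = 0 then a else b) = a + ((n:ℝ)-1)*b := by
    intro a b
    have h : ∀ i : Fin n, (if i.val = 0 then a else b) = b + (if i = (0:Fin n) then a - b else 0) := by
      intro i
      rcases eq_or_ne i 0 with h | h
      · simp [h]
      · have : i.val ≠ 0 := fun hv => h (Fin.ext hv)
        simp [h, this]
    simp_rw [h]
    rw [Finset.sum_add_distrib, Finset.sum_const, Finset.sum_ite_eq' Finset.univ (0:Fin n)]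
    simp [Finset.card_univ]
    ring
  have key2 : ∀ (a b : ℝ), ∑ i : Fin n, ∑ j : Fin n, (if i.val = 0 ∧ j.val = 0 then a else b)
      = a + ((n:ℝ)*(n:ℝ)-1)*b := by
    intro a b
    have h : ∀ i : Fin n, (∑ j : Fin n, (if i.val = 0 ∧ j.val = 0 then a else b))
        = (if i.val = 0 then a + ((n:ℝ)-1)*b else (n:ℝ)*b) := by
      intro i
      rcases eq_or_ne i.val 0 with h | h
      · simp only [h, true_and, if_true]
        exact key a b
      · simp [h]
    simp_rw [h]
    rw [key]
    ring
  unfold modularity barbellI barbellPi barbellChi2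
  rw [Fin.sum_univ_two]
  simp only [Fintype.sum_sum_type]
  simp only [show ((0:Fin 2)=1 ↔ False) from by decide, show ((1:Fin 2)=0 ↔ False) from by decide,
    if_false, if_true, one_mul, mul_one, zero_mul, mul_zero, Finset.sum_const_zero, add_zero,
    zero_add, eq_self_iff_true]
  simp only [Finset.sum_sub_distrib]
  rw [key2]
  have hπ : ∑ i : Fin n, ∑ j : Fin n,
      (if i.val = 0 then (1 + ε) / (2 * ((n : ℝ) + ε)) else 1 / (2 * ((n : ℝ) + ε))) *
      (if j.val = 0 then (1 + ε) / (2 * ((n : ℝ) + ε)) else 1 / (2 * ((n : ℝ) + ε)))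
      = ((1 + ε) / (2 * ((n : ℝ) + ε)) + ((n:ℝ)-1) * (1 / (2 * ((n : ℝ) + ε)))) ^ 2 := by
    rw [← Finset.sum_mul_sum]
    rw [key, sq]
  rw [hπ]
  field_simp
  ring
end

section
/- For the barbell graph with even n ≥ 4 and ε ∈ (0,1), the communication-graph modularity Q̄ strictly prefers the two-module partition: with C_1 = {l_0,…,l_{n−1}}, C_2 = {r_0,…,r_{n−1}}, C_{1,a} = {l_0,…,l_{n/2−1}}, and C_{1,b} = {l_{n/2},…,l_{n−1}}, one has Q̄(C_1, C_2) > Q̄(C_{1,a}, C_{1,b}, C_2). -/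
/-! ### Auxiliary lemmas -/

lemma bb_mod_eq {V : Type*} [Fintype V] {M : ℕ}
    (A : V → V → ℝ) (π : V → ℝ) (χ : Fin M → V → ℝ) :
    modularity A π χ
      = ∑ m, ((∑ x, ∑ y, χ m x * A x y * χ m y)
          - (∑ x, χ m x * π x) * (∑ x, χ m x * π x)) := by
  unfold modularity
  refine Finset.sum_congr rfl fun m _ => ?_
  rw [Finset.sum_mul_sum, ← Finset.sum_sub_distrib]
  refine Finset.sum_congr rfl fun x _ => ?_
  rw [← Finset.sum_sub_distrib]
  refine Finset.sum_congr rfl fun y _ => ?_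
  ring

lemma bb_sum_if_eq_zero {n : ℕ} (hn : 0 < n) (c : ℝ) :
    ∑ i : Fin n, (if i.val = 0 then c else 0) = c := by
  have h : ∀ i : Fin n, (i.val = 0) ↔ (i = ⟨0, hn⟩) := fun i => by simp [Fin.ext_iff]
  simp_rw [h]
  simp

lemma bb_sum_if_lt' {n k : ℕ} (hkn : k ≤ n) (a b : ℝ) :
    ∑ i : Fin n, (if i.val < k then a else b) = k * a + (n - k : ℕ) * b := by
  rw [Fin.sum_univ_eq_sum_range (fun i => if i < k then a else b)]
  rw [Finset.range_eq_Ico, ← Finset.sum_Ico_consecutive _ (Nat.zero_le k) hkn]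
  have h1 : ∑ i ∈ Finset.Ico 0 k, (if i < k then a else b) = k * a := by
    rw [Finset.sum_congr rfl fun i hi => if_pos (Finset.mem_Ico.mp hi).2]
    simp [mul_comm]
  have h2 : ∑ i ∈ Finset.Ico k n, (if i < k then a else b) = (n - k : ℕ) * b := by
    rw [Finset.sum_congr rfl fun i hi => if_neg (by have := (Finset.mem_Ico.mp hi).1; omega)]
    simp [mul_comm]
  rw [h1, h2]

lemma bb_sum_if_lt {n k : ℕ} (hkn : k ≤ n) (c : ℝ) :
    ∑ i : Fin n, (if i.val < k then c else 0) = (k : ℝ) * c := by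
  rw [bb_sum_if_lt' hkn c 0]; ring

lemma bb_sum_if_ge {n k : ℕ} (hkn : k ≤ n) (c : ℝ) :
    ∑ i : Fin n, (if k ≤ i.val then c else 0) = ((n - k : ℕ) : ℝ) * c := by
  have h : ∀ i : Fin n, (if k ≤ i.val then c else 0) = (if i.val < k then 0 else c) := by
    intro i; split_ifs <;> first | rfl | (exfalso; omega)
  simp_rw [h]
  rw [bb_sum_if_lt' hkn 0 c]; ring

section calc_lemmas
variable {n : ℕ} {ε : ℝ}

lemma bb_sum_pi_left (hn : 0 < n) :
    ∑ i : Fin n, barbellPi n ε (Sum.inl i) = ((n : ℝ) + ε) * (1 / (2 * ((n : ℝ) + ε))) := by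
  have h : ∀ i : Fin n, barbellPi n ε (Sum.inl i)
      = 1 / (2 * ((n : ℝ) + ε)) + (if i.val = 0 then ε * (1 / (2 * ((n : ℝ) + ε))) else 0) := by
    intro i
    simp only [barbellPi]
    split <;> ring
  simp_rw [h]
  rw [Finset.sum_add_distrib, bb_sum_if_eq_zero hn, Finset.sum_const, Finset.card_univ,
    Fintype.card_fin, nsmul_eq_mul]
  ring

lemma bb_sum_pi_left_lt (hn : 4 ≤ n) :
    ∑ i : Fin n, (if i.val < n / 2 then barbellPi n ε (Sum.inl i) else 0)
      = (((n / 2 : ℕ) : ℝ) + ε) * (1 / (2 * ((n : ℝ) + ε))) := by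
  have h : ∀ i : Fin n, (if i.val < n / 2 then barbellPi n ε (Sum.inl i) else 0)
      = (if i.val = 0 then ε * (1 / (2 * ((n : ℝ) + ε))) else 0)
        + (if i.val < n / 2 then 1 / (2 * ((n : ℝ) + ε)) else 0) := by
    intro i
    simp only [barbellPi]
    split_ifs <;> first | ring1 | (exfalso; omega)
  simp_rw [h]
  rw [Finset.sum_add_distrib, bb_sum_if_eq_zero (by omega), bb_sum_if_lt (by omega)]
  ring

lemma bb_sum_pi_left_ge (hn : 4 ≤ n) :
    ∑ i : Fin n, (if n / 2 ≤ i.val then barbellPi n ε (Sum.inl i) else 0)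
      = ((n - n / 2 : ℕ) : ℝ) * (1 / (2 * ((n : ℝ) + ε))) := by
  have h : ∀ i : Fin n, (if n / 2 ≤ i.val then barbellPi n ε (Sum.inl i) else 0)
      = (if n / 2 ≤ i.val then 1 / (2 * ((n : ℝ) + ε)) else 0) := by
    intro i
    simp only [barbellPi]
    split_ifs <;> first | ring1 | (exfalso; omega)
  simp_rw [h]
  rw [bb_sum_if_ge (by omega)]

lemma bb_sum_I_ll (hn : 0 < n) (hne : (n : ℝ) + ε ≠ 0) :
    ∑ i : Fin n, ∑ j : Fin n, barbellI n ε (Sum.inl i) (Sum.inl j)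
      = (n : ℝ) * (1 / (2 * ((n : ℝ) + ε))) + ε * (1 / (2 * ((n : ℝ) + ε))) / 2 := by
  have hn' : (n : ℝ) ≠ 0 := Nat.cast_ne_zero.mpr hn.ne'
  have h : ∀ i j : Fin n, barbellI n ε (Sum.inl i) (Sum.inl j)
      = (1 / (2 * ((n : ℝ) + ε))) / n
        + ((if i.val = 0 then (1:ℝ) else 0) * (ε * (1 / (2 * ((n : ℝ) + ε))) / 2))
            * (if j.val = 0 then (1:ℝ) else 0) := by
    intro i j
    simp only [barbellI]
    split_ifs <;> first | ring1 | (exfalso; omega)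
  simp_rw [h, Finset.sum_add_distrib, ← Finset.mul_sum, ← Finset.sum_mul,
    bb_sum_if_eq_zero hn, Finset.sum_const, Finset.card_univ, Fintype.card_fin, nsmul_eq_mul]
  field_simp

lemma bb_sum_I_ll_ltlt (hn : 4 ≤ n) :
    ∑ i : Fin n, ∑ j : Fin n,
        (if j.val < n / 2 then (if i.val < n / 2 then barbellI n ε (Sum.inl i) (Sum.inl j) else 0) else 0)
      = ((n / 2 : ℕ) : ℝ)^2 * ((1 / (2 * ((n : ℝ) + ε))) / n)
          + ε * (1 / (2 * ((n : ℝ) + ε))) / 2 := by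
  have h : ∀ i j : Fin n,
      (if j.val < n / 2 then (if i.val < n / 2 then barbellI n ε (Sum.inl i) (Sum.inl j) else 0) else 0)
      = ((if i.val < n / 2 then (1:ℝ) else 0) * ((1 / (2 * ((n : ℝ) + ε))) / n))
          * (if j.val < n / 2 then (1:ℝ) else 0)
        + ((if i.val = 0 then (1:ℝ) else 0) * (ε * (1 / (2 * ((n : ℝ) + ε))) / 2))
            * (if j.val = 0 then (1:ℝ) else 0) := by
    intro i j
    simp only [barbellI]
    split_ifs <;> first | ring1 | (exfalso; omega)
  simp_rw [h, Finset.sum_add_distrib, ← Finset.mul_sum, ← Finset.sum_mul,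
    bb_sum_if_eq_zero (show 0 < n by omega), bb_sum_if_lt (show n / 2 ≤ n by omega)]
  ring

lemma bb_sum_I_ll_gege (hn : 4 ≤ n) :
    ∑ i : Fin n, ∑ j : Fin n,
        (if n / 2 ≤ j.val then (if n / 2 ≤ i.val then barbellI n ε (Sum.inl i) (Sum.inl j) else 0) else 0)
      = ((n - n / 2 : ℕ) : ℝ)^2 * ((1 / (2 * ((n : ℝ) + ε))) / n) := by
  have h : ∀ i j : Fin n,
      (if n / 2 ≤ j.val then (if n / 2 ≤ i.val then barbellI n ε (Sum.inl i) (Sum.inl j) else 0) else 0)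
      = ((if n / 2 ≤ i.val then (1:ℝ) else 0) * ((1 / (2 * ((n : ℝ) + ε))) / n))
          * (if n / 2 ≤ j.val then (1:ℝ) else 0) := by
    intro i j
    simp only [barbellI]
    split_ifs <;> first | ring1 | (exfalso; omega)
  simp_rw [h, ← Finset.mul_sum, ← Finset.sum_mul, bb_sum_if_ge (show n / 2 ≤ n by omega)]
  ring

end calc_lemmas

/-- For even `n ≥ 4`, the communication-graph modularity of the barbell
graph strictly prefers the two-module partition over splitting the left module. -/
theorem barbell_commModularity_two_better (n : ℕ) (hn : 4 ≤ n) (hn2 : Even n)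
    (ε : ℝ) (hε0 : 0 < ε) (hε1 : ε < 1) :
    modularity (barbellI n ε) (barbellPi n ε) (barbellChi2 n)
      > modularity (barbellI n ε) (barbellPi n ε) (barbellChi3 n) := by
  have hpi : ∀ i : Fin n, barbellPi n ε (Sum.inr i) = barbellPi n ε (Sum.inl i) := fun _ => rfl
  have hii : ∀ i j : Fin n, barbellI n ε (Sum.inr i) (Sum.inr j)
      = barbellI n ε (Sum.inl i) (Sum.inl j) := fun _ _ => rfl
  rw [bb_mod_eq, bb_mod_eq, Fin.sum_univ_two, Fin.sum_univ_three]
  simp only [Fintype.sum_sum_type, barbellChi2, barbellChi3]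
  simp only [Fin.isValue, Fin.reduceEq, if_true, if_false, one_ne_zero, zero_ne_one, true_and,
    false_and, and_true, and_false, if_pos rfl, reduceCtorEq, ite_mul, mul_ite, one_mul,
    zero_mul, mul_one, mul_zero, Finset.sum_const_zero, add_zero, zero_add, ite_self]
  simp_rw [hpi, hii]
  rw [bb_sum_I_ll (by omega) (by positivity), bb_sum_pi_left (by omega), bb_sum_I_ll_ltlt hn,
    bb_sum_I_ll_gege hn, bb_sum_pi_left_lt hn, bb_sum_pi_left_ge hn]
  -- now a closed-form inequality
  obtain ⟨k, hk⟩ := hn2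
  have hk2 : n / 2 = k := by omega
  have hnk : (n : ℝ) = 2 * (k : ℝ) := by rw [hk]; push_cast; ring
  have hnk2 : ((n - k : ℕ) : ℝ) = (k : ℝ) := by rw [hk]; push_cast [Nat.add_sub_cancel]; ring
  have hkpos : (0:ℝ) < (k : ℝ) := by exact_mod_cast (show 0 < k by omega)
  rw [hk2, hnk2, hnk]
  rw [gt_iff_lt, ← sub_pos]
  have hne : 2 * (k:ℝ) + ε ≠ 0 := by positivity
  have hX : 0 < 2 * (k:ℝ)^2 * (1 / (2 * (2 * (k:ℝ) + ε)))^2 := by positivity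
  convert hX using 1
  field_simp
  ring
end
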